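/- arXiv:2105.11026 — 2 statements merged into one kernel-verified Lean document; each statement's English description precedes it below -/
import Mathlib

section
/- Let k ≥ 2, let η ≥ 0, let A_1, ..., A_{k+1} be strictly positive reals with ∑ A_j = 1, and let k_1, ..., k_{k+1} be positive integers with ∑ k_j = 2k, such that A_j + 2η(k_j - 1) = λ is independent of j. Then η < 1/4. -/
/-! Summing the balance equations gives `(k + 1) λ = 1 + 2η(k - 1)`, while a domain with
`k_j ≥ 2` (one exists since `∑ k_j = 2k > k + 1`) gives `λ > 2η`; together `4η < 1`. -/

open Finset

theorem sum_add_mul_sub_one_eq_card_mul {ι : Type*} [Fintype ι] {A m : ι → ℝ} {c lam : ℝ}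
    (h : ∀ j, A j + c * (m j - 1) = lam) :
    ∑ j, A j + c * (∑ j, m j - Fintype.card ι) = Fintype.card ι * lam := by
  have := Finset.sum_congr rfl fun j (_ : j ∈ univ) => h j
  simp only [sum_add_distrib, ← mul_sum, sum_sub_distrib, sum_const, card_univ,
    nsmul_eq_mul, mul_one] at this
  exact this

theorem eta_lt_quarter_general (k : ℕ) (hk : 2 ≤ k) (η : ℝ) (hη : 0 ≤ η)
    (A : Fin (k + 1) → ℝ) (hApos : ∀ j, 0 < A j) (hA : ∑ j, A j = 1)
    (kj : Fin (k + 1) → ℕ)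
    (hsum : ∑ j, kj j = 2 * k)
    (lam : ℝ) (hmono : ∀ j, A j + 2 * η * ((kj j : ℝ) - 1) = lam) :
    η < 1 / 4 := by
  have hcard_lt : ∑ _j : Fin (k + 1), 1 < ∑ j, kj j := by
    simp only [sum_const, card_univ, Fintype.card_fin, smul_eq_mul, mul_one, hsum]
    omega
  obtain ⟨j₀, -, hj₀⟩ := exists_lt_of_sum_lt hcard_lt
  have hkj₀ : (2 : ℝ) ≤ kj j₀ := by exact_mod_cast hj₀
  have hlam : 2 * η < lam := by nlinarith [hApos j₀, hmono j₀]
  have htotal := sum_add_mul_sub_one_eq_card_mul hmono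
  rw [hA, ← Nat.cast_sum, hsum, Fintype.card_fin] at htotal
  push_cast at htotal
  have : ((k : ℝ) + 1) * (2 * η) < ((k : ℝ) + 1) * lam :=
    mul_lt_mul_of_pos_left hlam (by positivity)
  linarith

/-- An η-monotone link on the unit-area sphere with `k ≥ 2` components forces
the bulk parameter to satisfy `η < 1/4`. -/
theorem eta_lt_quarter (k : ℕ) (hk : 2 ≤ k) (η : ℝ) (hη : 0 ≤ η)
    (A : Fin (k + 1) → ℝ) (hApos : ∀ j, 0 < A j) (hA : ∑ j, A j = 1)
    (kj : Fin (k + 1) → ℕ) (hkj : ∀ j, 1 ≤ kj j)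
    (hsum : ∑ j, kj j = 2 * k)
    (lam : ℝ) (hmono : ∀ j, A j + 2 * η * ((kj j : ℝ) - 1) = lam) :
    η < 1 / 4 :=
  eta_lt_quarter_general k hk η hη A hApos hA kj hsum lam hmono
end

section
/- Let G be a group and c : G → ℝ a function with c(1) = 0, c(gh) ≤ c(g) + c(h) for all g,h ∈ G, and suppose there exists D ≥ 0 such that c(g) + c(g⁻¹) ≤ D for all g ∈ G. Then μ(g) := lim_{n→∞} c(gⁿ)/n exists for every g ∈ G, and μ is a homogeneous quasimorphism on G with defect at most 2D. -/
/-!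
Fekete's lemma makes `c (gⁿ) / n` converge: `c (gⁿ) + c (g⁻ⁿ) ≥ c 1 ≥ 0` bounds it below by
`-c g⁻¹`. The bounds `0 ≤ c (gⁿ) + c (g⁻ⁿ) ≤ D` force `μ g⁻¹ = -μ g`, and then
`c - D ≤ μ ≤ c`, so `μ` is subadditive up to `2D`; applied to `h⁻¹ g⁻¹` this gives the reverse
inequality.
-/

open Filter

section Monoid

variable {M : Type*} [Monoid M] {c : M → ℝ}

theorem subadditive_apply_pow (hsub : ∀ g h : M, c (g * h) ≤ c g + c h) (g : M) :
    Subadditive fun n : ℕ => c (g ^ n) := fun m n => by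
  simpa only [pow_add] using hsub (g ^ m) (g ^ n)

theorem apply_pow_div_le (hsub : ∀ g h : M, c (g * h) ≤ c g + c h) (g : M) {n : ℕ}
    (hn : n ≠ 0) : c (g ^ n) / n ≤ c g := by
  obtain ⟨k, rfl⟩ := Nat.exists_eq_succ_of_ne_zero hn
  have := (subadditive_apply_pow hsub g).apply_mul_add_le k 1 1
  simp only [mul_one, pow_one] at this
  rw [div_le_iff₀ (by positivity)]
  push_cast
  linarith

noncomputable def homogenization (c : M → ℝ) (g : M) : ℝ :=
  limUnder atTop fun n : ℕ => c (g ^ n) / n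

theorem homogenization_one (c : M → ℝ) : homogenization c 1 = 0 := by
  simp only [homogenization, one_pow]
  exact (tendsto_const_div_atTop_nhds_zero_nat (c 1)).limUnder_eq

end Monoid

section Group

variable {G : Type*} [Group G] {c : G → ℝ}

theorem apply_add_apply_inv_nonneg (hsub : ∀ g h : G, c (g * h) ≤ c g + c h) (g : G) :
    0 ≤ c g + c g⁻¹ := by
  have h1 := hsub 1 1
  have h2 := hsub g g⁻¹
  rw [one_mul] at h1
  rw [mul_inv_cancel] at h2
  linarith

theorem bddBelow_apply_pow_div (hsub : ∀ g h : G, c (g * h) ≤ c g + c h) (g : G) :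
    BddBelow (Set.range fun n : ℕ => c (g ^ n) / n) := by
  refine ⟨min 0 (-c g⁻¹), ?_⟩
  rintro _ ⟨n, rfl⟩
  rcases eq_or_ne n 0 with rfl | hn
  · simp
  have hinv := apply_pow_div_le hsub g⁻¹ hn
  have hpos := apply_add_apply_inv_nonneg hsub (g ^ n)
  rw [← inv_pow] at hpos
  calc min 0 (-c g⁻¹) ≤ -c g⁻¹ := min_le_right _ _
    _ ≤ -(c (g⁻¹ ^ n) / n) := neg_le_neg hinv
    _ ≤ c (g ^ n) / n := by
      rw [neg_le, ← neg_div, div_le_div_iff_of_pos_right (by positivity)]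
      linarith

theorem tendsto_homogenization (hsub : ∀ g h : G, c (g * h) ≤ c g + c h) (g : G) :
    Tendsto (fun n : ℕ => c (g ^ n) / n) atTop (nhds (homogenization c g)) :=
  tendsto_nhds_limUnder
    ⟨_, (subadditive_apply_pow hsub g).tendsto_lim (bddBelow_apply_pow_div hsub g)⟩

theorem homogenization_pow (hsub : ∀ g h : G, c (g * h) ≤ c g + c h) (g : G) (m : ℕ) :
    homogenization c (g ^ m) = m * homogenization c g := by
  rcases eq_or_ne m 0 with rfl | hm
  · simp [homogenization_one]
  have hmul : Tendsto (fun n : ℕ => m * n) atTop atTop :=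
    tendsto_id.const_mul_atTop' (Nat.pos_of_ne_zero hm)
  refine tendsto_nhds_unique (tendsto_homogenization hsub (g ^ m)) ?_
  refine (((tendsto_homogenization hsub g).comp hmul).const_mul (m : ℝ)).congr fun n => ?_
  simp only [Function.comp, ← pow_mul, Nat.cast_mul]
  rw [← mul_div_assoc, mul_div_mul_left _ _ (Nat.cast_ne_zero.2 hm)]

theorem homogenization_inv (hsub : ∀ g h : G, c (g * h) ≤ c g + c h) {D : ℝ}
    (hdual : ∀ g : G, c g + c g⁻¹ ≤ D) (g : G) :
    homogenization c g⁻¹ = -homogenization c g := by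
  have hsum := (tendsto_homogenization hsub g).add (tendsto_homogenization hsub g⁻¹)
  simp only [← add_div, inv_pow] at hsum
  have hzero : Tendsto (fun n : ℕ => (c (g ^ n) + c (g ^ n)⁻¹) / n) atTop (nhds 0) :=
    tendsto_of_tendsto_of_tendsto_of_le_of_le tendsto_const_nhds
      (tendsto_const_div_atTop_nhds_zero_nat D)
      (fun n => div_nonneg (apply_add_apply_inv_nonneg hsub _) n.cast_nonneg)
      (fun n => div_le_div_of_nonneg_right (hdual _) n.cast_nonneg)
  linarith [tendsto_nhds_unique hsum hzero]

theorem homogenization_zpow (hsub : ∀ g h : G, c (g * h) ≤ c g + c h) {D : ℝ}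
    (hdual : ∀ g : G, c g + c g⁻¹ ≤ D) (g : G) (n : ℤ) :
    homogenization c (g ^ n) = n * homogenization c g := by
  rcases n with m | m
  · simpa using homogenization_pow hsub g m
  · rw [zpow_negSucc, homogenization_inv hsub hdual, homogenization_pow hsub]
    push_cast
    ring

theorem homogenization_le (hsub : ∀ g h : G, c (g * h) ≤ c g + c h) (g : G) :
    homogenization c g ≤ c g :=
  le_of_tendsto (tendsto_homogenization hsub g)
    (eventually_ne_atTop 0 |>.mono fun _ hn => apply_pow_div_le hsub g hn)

theorem le_homogenization_add (hsub : ∀ g h : G, c (g * h) ≤ c g + c h) {D : ℝ}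
    (hdual : ∀ g : G, c g + c g⁻¹ ≤ D) (g : G) :
    c g ≤ homogenization c g + D := by
  have := homogenization_le hsub g⁻¹
  rw [homogenization_inv hsub hdual] at this
  linarith [hdual g]

theorem homogenization_mul_le (hsub : ∀ g h : G, c (g * h) ≤ c g + c h) {D : ℝ}
    (hdual : ∀ g : G, c g + c g⁻¹ ≤ D) (g h : G) :
    homogenization c (g * h) ≤ homogenization c g + homogenization c h + 2 * D :=
  calc homogenization c (g * h) ≤ c (g * h) := homogenization_le hsub _
    _ ≤ c g + c h := hsub g h
    _ ≤ homogenization c g + homogenization c h + 2 * D := by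
      linarith [le_homogenization_add hsub hdual g, le_homogenization_add hsub hdual h]

theorem abs_homogenization_mul_sub_le (hsub : ∀ g h : G, c (g * h) ≤ c g + c h) {D : ℝ}
    (hdual : ∀ g : G, c g + c g⁻¹ ≤ D) (g h : G) :
    |homogenization c (g * h) - homogenization c g - homogenization c h| ≤ 2 * D := by
  have hupper := homogenization_mul_le hsub hdual g h
  have hlower := homogenization_mul_le hsub hdual h⁻¹ g⁻¹
  simp only [← mul_inv_rev, homogenization_inv hsub hdual] at hlower
  rw [abs_le]
  constructor <;> linarith

end Group

theorem homogenization_quasimorphism_general {G : Type*} [Group G]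
    (c : G → ℝ)
    (hsub : ∀ g h : G, c (g * h) ≤ c g + c h)
    (D : ℝ) (hdual : ∀ g : G, c g + c g⁻¹ ≤ D) :
    ∃ μ : G → ℝ,
      (∀ g : G, Tendsto (fun n : ℕ => c (g ^ n) / n) atTop (nhds (μ g))) ∧
      (∀ (g : G) (n : ℤ), μ (g ^ n) = n * μ g) ∧
      (∀ g h : G, |μ (g * h) - μ g - μ h| ≤ 2 * D) :=
  ⟨homogenization c, tendsto_homogenization hsub, homogenization_zpow hsub hdual,
    abs_homogenization_mul_sub_le hsub hdual⟩

/-- Usher's homogenization mechanism: a subadditive function `c : G → ℝ` with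
`c(1) = 0` and `c(g) + c(g⁻¹) ≤ D` homogenizes to a homogeneous quasimorphism
`μ(g) = lim c(gⁿ)/n` with defect at most `2D`. -/
theorem homogenization_quasimorphism {G : Type*} [Group G]
    (c : G → ℝ) (hone : c 1 = 0)
    (hsub : ∀ g h : G, c (g * h) ≤ c g + c h)
    (D : ℝ) (hD : 0 ≤ D) (hdual : ∀ g : G, c g + c g⁻¹ ≤ D) :
    ∃ μ : G → ℝ,
      (∀ g : G, Tendsto (fun n : ℕ => c (g ^ n) / n) atTop (nhds (μ g))) ∧
      (∀ (g : G) (n : ℤ), μ (g ^ n) = n * μ g) ∧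
      (∀ g h : G, |μ (g * h) - μ g - μ h| ≤ 2 * D) :=
  homogenization_quasimorphism_general c hsub D hdual
end
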